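/- arXiv:1910.10267 — 6 statements merged into one kernel-verified Lean document; each statement's English description precedes it below -/
import Mathlib

section
/- Let p/q ∈ ℚ ∪ {∞} (written with p ≥ 0, gcd(p,q) = 1). Then p/q admits an even continued fraction expansion [b_1,…,b_n] = p/q for some n ≥ 0 if and only if p/q = ∞, or |p/q| ≥ 1 and at least one of p, q is even. Moreover, this expansion is always unique: any two even continued fraction expansions of the same value coincide. -/
open scoped BigOperators

/-- Continued fraction value in `ℚ ∪ {∞}`, with `none` playing the role of `∞ = 1/0`.
`[ ] = ∞`, and `[c₁,…,cₙ] = c₁ + 1/[c₂,…,cₙ]` with `x + ∞ = ∞` and `1/∞ = 0`. -/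
def cfVal : List ℤ → Option ℚ
  | [] => none
  | c :: cs =>
    match cfVal cs with
    | none => some (c : ℚ)
    | some x => if x = 0 then none else some ((c : ℚ) + 1 / x)

/-- A continued fraction is positive if every term is at least 1. -/
def PosCF (L : List ℤ) : Prop := ∀ a ∈ L, 1 ≤ a

/-- A continued fraction is even if every term is even and nonzero. -/
def EvenCF (L : List ℤ) : Prop := ∀ b ∈ L, 2 ∣ b ∧ b ≠ 0


lemma cfVal_cons_none {cs : List ℤ} (c : ℤ) (h : cfVal cs = none) :
    cfVal (c :: cs) = some (c : ℚ) := by simp [cfVal, h]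

lemma cfVal_cons_some {cs : List ℤ} {x : ℚ} (c : ℤ) (h : cfVal cs = some x) (hx : x ≠ 0) :
    cfVal (c :: cs) = some ((c : ℚ) + 1 / x) := by simp [cfVal, h, hx]

lemma isCoprime_num_den (r : ℚ) : IsCoprime r.num (r.den : ℤ) := by
  rw [Int.isCoprime_iff_gcd_eq_one]
  exact r.reduced

lemma coprime_aux (r : ℚ) (b : ℤ) :
    Nat.Coprime (r.num + b * r.den).natAbs ((r.den : ℤ)).natAbs := by
  have h : IsCoprime (r.num + b * r.den) (r.den : ℤ) := by
    have := (isCoprime_num_den r).add_mul_left_left b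
    rwa [mul_comm] at this
  exact Int.isCoprime_iff_gcd_eq_one.mp h

lemma add_int_num_den (r : ℚ) (b : ℤ) :
    (r + b).num = r.num + b * r.den ∧ ((r + b).den : ℤ) = r.den := by
  have hd : (0 : ℤ) < (r.den : ℤ) := mod_cast r.pos
  have key : r + (b : ℚ) = ((r.num + b * r.den : ℤ) : ℚ) / ((r.den : ℤ) : ℚ) := by
    rw [eq_div_iff (by exact_mod_cast hd.ne')]
    push_cast
    rw [add_mul]
    congr 1
    have hden : ((r.den : ℤ) : ℚ) ≠ 0 := by exact_mod_cast hd.ne'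
    have h2 := Rat.num_div_den r
    rw [div_eq_iff (by exact_mod_cast hden)] at h2
    push_cast at h2 ⊢
    linarith [h2]
  exact ⟨by rw [key]; exact Rat.num_div_eq_of_coprime hd (coprime_aux r b),
    by rw [key]; exact Rat.den_div_eq_of_coprime hd (coprime_aux r b)⟩

lemma inv_facts (x : ℚ) (hx : x ≠ 0) :
    (x⁻¹).den = x.num.natAbs ∧ (Even (x⁻¹).num ↔ Even (x.den : ℤ)) := by
  have hnum : x.num ≠ 0 := Rat.num_ne_zero.mpr hx
  have hkey : x⁻¹ = ((x.den : ℤ) : ℚ) / ((x.num : ℤ) : ℚ) := by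
    rw [Rat.inv_def, Rat.divInt_eq_div]
  have hcop : Nat.Coprime ((x.den : ℤ)).natAbs x.num.natAbs := by
    simpa using x.reduced.symm
  rcases hnum.lt_or_gt with hneg | hpos
  · have hkey2 : x⁻¹ = ((-(x.den : ℤ)) : ℚ) / ((-(x.num : ℤ)) : ℚ) := by
      rw [hkey]; push_cast [neg_div_neg_eq]
      norm_cast
    have hcop2 : Nat.Coprime (-(x.den : ℤ)).natAbs (-x.num).natAbs := by
      simpa [Int.natAbs_neg] using hcop
    have hpos2 : (0 : ℤ) < -x.num := by omega
    have hn := Rat.num_div_eq_of_coprime hpos2 hcop2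
    have hd := Rat.den_div_eq_of_coprime hpos2 hcop2
    push_cast at hn hd hkey2
    rw [← hkey2] at hn hd
    constructor
    · omega
    · rw [hn]; simp [even_neg]
  · have hn := Rat.num_div_eq_of_coprime hpos hcop
    have hd := Rat.den_div_eq_of_coprime hpos hcop
    rw [← hkey] at hn hd
    constructor
    · omega
    · rw [hn]

lemma abs_lt_one_iff (q : ℚ) : |q| < 1 ↔ |q.num| < (q.den : ℤ) := by
  have hd : (0 : ℚ) < (q.den : ℚ) := by exact_mod_cast q.pos
  have : |q| = (|q.num| : ℚ) / (q.den : ℚ) := by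
    rw [← Rat.num_div_den q, abs_div, abs_of_pos hd]
    push_cast
    rw [Rat.num_div_den]
  rw [this, div_lt_one hd]
  exact_mod_cast Iff.rfl

lemma parity_add_int (r : ℚ) (b : ℤ) (hb : 2 ∣ b) :
    (Even ((b : ℚ) + r).num ∨ Even (((b : ℚ) + r).den : ℤ)) ↔
      (Even r.num ∨ Even (r.den : ℤ)) := by
  obtain ⟨hn, hd⟩ := add_int_num_den r b
  rw [add_comm ((b : ℚ)) r, hn, hd]
  constructor
  · rintro (h | h)
    · left; rcases hb with ⟨k, rfl⟩
      rcases h with ⟨m, hm⟩; exact ⟨m - k * r.den, by linarith⟩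
    · right; exact h
  · rintro (h | h)
    · left; rcases hb with ⟨k, rfl⟩
      rcases h with ⟨m, hm⟩; exact ⟨m + k * r.den, by linarith⟩
    · right; exact h

lemma evencf_val : ∀ L : List ℤ, EvenCF L → L ≠ [] →
    ∃ r : ℚ, cfVal L = some r ∧ 1 < |r| ∧ (Even r.num ∨ Even (r.den : ℤ)) := by
  intro L
  induction L with
  | nil => intro _ h; exact absurd rfl h
  | cons b cs ih =>
    intro h _
    obtain ⟨hb2, hb0⟩ := h b (by simp)
    have hb2' : 2 ≤ |b| := by
      rcases abs_cases b with ⟨h1, h2⟩ | ⟨h1, h2⟩ <;> omega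
    cases hcs : cfVal cs with
    | none =>
      refine ⟨(b : ℚ), cfVal_cons_none b hcs, ?_, Or.inl ?_⟩
      · have hbb : (2 : ℚ) ≤ |(b : ℚ)| := by
          rw [← Int.cast_abs]; exact_mod_cast hb2'
        linarith
      · simp only [Rat.num_intCast]
        rcases hb2 with ⟨k, rfl⟩; exact ⟨k, by ring⟩
    | some x =>
      have hcs_ne : cs ≠ [] := by rintro rfl; simp [cfVal] at hcs
      obtain ⟨x', hx', hx1, hxp⟩ := ih (fun a ha => h a (List.mem_cons_of_mem _ ha)) hcs_ne
      rw [hcs] at hx'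
      obtain rfl : x = x' := by injection hx'
      have hx0 : x ≠ 0 := by
        intro h0; rw [h0] at hx1; simp at hx1; linarith
      refine ⟨(b : ℚ) + 1 / x, cfVal_cons_some b hcs hx0, ?_, ?_⟩
      · have h1x : |1 / x| < 1 := by
          rw [one_div, abs_inv]
          rw [inv_lt_one_iff₀]
          right; exact hx1
        have hbb : (2 : ℚ) ≤ |(b : ℚ)| := by
          rw [← Int.cast_abs]; exact_mod_cast hb2'
        have := abs_add_le ((b : ℚ) + 1 / x) (-(1 / x))
        simp only [abs_neg] at this
        have h2 : |(b:ℚ)| ≤ |(b : ℚ) + 1 / x| + |1/x| := by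
          calc |(b:ℚ)| = |(b:ℚ) + 1/x + -(1/x)| := by ring_nf
          _ ≤ _ := this
        linarith
      · rw [parity_add_int (1/x) b hb2]
        rw [one_div]
        obtain ⟨hd, hnum⟩ := inv_facts x hx0
        rcases hxp with h | h
        · right; rw [hd, Int.even_coe_nat, Int.natAbs_even]; exact h
        · left; exact hnum.mpr h

lemma even_close {b c : ℤ} (hb : 2 ∣ b) (hc : 2 ∣ c) (h : |(b : ℚ) - (c : ℚ)| < 2) : b = c := by
  have h2 : |b - c| < 2 := by
    have : |((b - c : ℤ) : ℚ)| < 2 := by push_cast; exact h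
    rw [← Int.cast_abs] at this
    exact_mod_cast this
  rcases abs_cases (b - c) with ⟨h1, _⟩ | ⟨h1, _⟩ <;> omega

lemma tail_empty_of_cfVal_none {cs : List ℤ} (h : EvenCF cs) (hn : cfVal cs = none) :
    cs = [] := by
  by_contra hne
  obtain ⟨r, hr, -, -⟩ := evencf_val cs h hne
  rw [hr] at hn; exact absurd hn (by simp)

lemma evencf_unique : ∀ L M : List ℤ, EvenCF L → EvenCF M → cfVal L = cfVal M → L = M := by
  intro L
  induction L with
  | nil =>
    intro M _ hM heq
    cases M with
    | nil => rfl
    | cons c M' =>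
      obtain ⟨r, hr, -, -⟩ := evencf_val (c :: M') hM (by simp)
      rw [hr] at heq
      exact absurd heq (by simp [cfVal])
  | cons b L' ih =>
    intro M hL hM heq
    cases M with
    | nil =>
      obtain ⟨r, hr, -, -⟩ := evencf_val (b :: L') hL (by simp)
      rw [hr] at heq
      exact absurd heq (by simp [cfVal])
    | cons c M' =>
      have hL' : EvenCF L' := fun a ha => hL a (List.mem_cons_of_mem _ ha)
      have hM' : EvenCF M' := fun a ha => hM a (List.mem_cons_of_mem _ ha)
      obtain ⟨hbdvd, hb0⟩ := hL b (by simp)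
      obtain ⟨hcdvd, hc0⟩ := hM c (by simp)
      cases hL2 : cfVal L' with
      | none =>
        obtain rfl : L' = [] := tail_empty_of_cfVal_none hL' hL2
        cases hM2 : cfVal M' with
        | none =>
          obtain rfl : M' = [] := tail_empty_of_cfVal_none hM' hM2
          rw [cfVal_cons_none b hL2, cfVal_cons_none c hM2] at heq
          have : (b : ℚ) = (c : ℚ) := by injection heq
          have : b = c := by exact_mod_cast this
          rw [this]
        | some y =>
          have hM'ne : M' ≠ [] := by rintro rfl; simp [cfVal] at hM2
          obtain ⟨y', hy', hy1, -⟩ := evencf_val M' hM' hM'ne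
          rw [hM2] at hy'
          obtain rfl : y = y' := by injection hy'
          have hy0 : y ≠ 0 := by intro h0; rw [h0] at hy1; simp at hy1; linarith
          rw [cfVal_cons_none b hL2, cfVal_cons_some c hM2 hy0] at heq
          have heq' : (b : ℚ) = (c : ℚ) + 1 / y := by injection heq
          have h1y : |1 / y| < 1 := by
            rw [one_div, abs_inv, inv_lt_one_iff₀]; right; exact hy1
          have hbc : b = c := by
            apply even_close hbdvd hcdvd
            have : (b : ℚ) - c = 1 / y := by linarith [heq']
            rw [this]; linarith
          exfalso
          have : (1 : ℚ) / y = 0 := by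
            rw [hbc] at heq'; linarith
          exact one_div_ne_zero hy0 this
      | some x =>
        have hL'ne : L' ≠ [] := by rintro rfl; simp [cfVal] at hL2
        obtain ⟨x', hx', hx1, -⟩ := evencf_val L' hL' hL'ne
        rw [hL2] at hx'
        obtain rfl : x = x' := by injection hx'
        have hx0 : x ≠ 0 := by intro h0; rw [h0] at hx1; simp at hx1; linarith
        have h1x : |1 / x| < 1 := by
          rw [one_div, abs_inv, inv_lt_one_iff₀]; right; exact hx1
        cases hM2 : cfVal M' with
        | none =>
          obtain rfl : M' = [] := tail_empty_of_cfVal_none hM' hM2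
          rw [cfVal_cons_some b hL2 hx0, cfVal_cons_none c hM2] at heq
          have heq' : (b : ℚ) + 1 / x = (c : ℚ) := by injection heq
          have hbc : b = c := by
            apply even_close hbdvd hcdvd
            have : (b : ℚ) - c = -(1 / x) := by linarith [heq']
            rw [this, abs_neg]; linarith
          exfalso
          have : (1 : ℚ) / x = 0 := by rw [hbc] at heq'; linarith
          exact one_div_ne_zero hx0 this
        | some y =>
          have hM'ne : M' ≠ [] := by rintro rfl; simp [cfVal] at hM2
          obtain ⟨y', hy', hy1, -⟩ := evencf_val M' hM' hM'ne
          rw [hM2] at hy'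
          obtain rfl : y = y' := by injection hy'
          have hy0 : y ≠ 0 := by intro h0; rw [h0] at hy1; simp at hy1; linarith
          have h1y : |1 / y| < 1 := by
            rw [one_div, abs_inv, inv_lt_one_iff₀]; right; exact hy1
          rw [cfVal_cons_some b hL2 hx0, cfVal_cons_some c hM2 hy0] at heq
          have heq' : (b : ℚ) + 1 / x = (c : ℚ) + 1 / y := by injection heq
          have hbc : b = c := by
            apply even_close hbdvd hcdvd
            have habs : |(b : ℚ) - c| ≤ |1 / y| + |1 / x| := by
              have : (b : ℚ) - c = 1 / y - 1 / x := by linarith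
              rw [this]
              exact abs_sub _ _
            linarith
          have hxy : x = y := by
            have : (1 : ℚ) / x = 1 / y := by rw [hbc] at heq'; linarith
            field_simp at this
            linarith [this]
          rw [hbc, ih M' hL' hM' (by rw [hL2, hM2, hxy])]

lemma exists_evencf : ∀ n : ℕ, ∀ r : ℚ, r.den ≤ n → 1 < |r| →
    (Even r.num ∨ Even (r.den : ℤ)) → ∃ L, EvenCF L ∧ cfVal L = some r := by
  intro n
  induction n with
  | zero => intro r h _ _; exact absurd h (by have := r.pos; omega)
  | succ n ih =>
    intro r hden habs hpar
    by_cases h1 : r.den = 1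
    · have hr : ((r.num : ℚ)) = r := by
        conv_rhs => rw [← Rat.num_div_den r]
        rw [h1]; simp
      have hnum_even : Even r.num := by
        rcases hpar with h | h
        · exact h
        · exfalso; rw [h1] at h; norm_num at h
      have hr0 : r ≠ 0 := by intro h0; rw [h0] at habs; simp at habs; linarith
      refine ⟨[r.num], ?_, ?_⟩
      · intro a ha
        simp only [List.mem_singleton] at ha
        subst ha
        refine ⟨?_, Rat.num_ne_zero.mpr hr0⟩
        rcases hnum_even with ⟨k, hk⟩; exact ⟨k, by omega⟩
      · rw [show cfVal [r.num] = some ((r.num : ℚ)) from rfl, hr]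
    · have hden2 : 2 ≤ r.den := by have := r.pos; omega
      set b : ℤ := 2 * round (r / 2) with hb
      set t : ℚ := r + ((-b : ℤ) : ℚ) with ht
      obtain ⟨ht_num, ht_den⟩ := add_int_num_den r (-b)
      have habs1 : |t| ≤ 1 := by
        have h2 : t = 2 * (r / 2 - round (r / 2)) := by
          rw [ht, hb]; push_cast; ring
        rw [h2, abs_mul, abs_two]
        linarith [abs_sub_round (r / 2)]
      have ht_den' : t.den = r.den := by exact_mod_cast ht_den
      have ht_ne : t ≠ 0 := by
        intro h0
        rw [h0] at ht_den'
        simp at ht_den'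
        omega
      have habs2 : |t| < 1 := by
        rcases lt_or_eq_of_le habs1 with h | h
        · exact h
        · exfalso
          rcases (abs_eq (by norm_num : (0:ℚ) ≤ 1)).mp h with h2 | h2 <;>
            · rw [h2] at ht_den'; simp at ht_den'; omega
      have ht_pos : 0 < |t| := abs_pos.mpr ht_ne
      obtain ⟨hs_den, hs_par⟩ := inv_facts t ht_ne
      have hs1 : 1 < |t⁻¹| := by
        rw [abs_inv]
        rw [one_lt_inv_iff₀]
        exact ⟨ht_pos, habs2⟩
      have hs_den_le : t⁻¹.den ≤ n := by
        have h3 := (abs_lt_one_iff t).mp habs2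
        rw [Int.abs_eq_natAbs] at h3
        rw [hs_den]
        omega
      have ht_par : Even t.num ∨ Even (t.den : ℤ) := by
        have := parity_add_int r (-b) ⟨-(round (r/2)), by rw [hb]; ring⟩
        rw [add_comm ((((-b) : ℤ) : ℚ)) r, ← ht] at this
        exact this.mpr hpar
      have hs_par' : Even t⁻¹.num ∨ Even (t⁻¹.den : ℤ) := by
        rcases ht_par with h | h
        · right
          rw [hs_den, Int.even_coe_nat, Int.natAbs_even]
          exact h
        · left; exact hs_par.mpr h
      obtain ⟨L', hL', hval'⟩ := ih t⁻¹ hs_den_le hs1 hs_par'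
      have hs0 : t⁻¹ ≠ 0 := by
        intro h0; rw [h0] at hs1; simp at hs1; linarith
      refine ⟨b :: L', ?_, ?_⟩
      · intro a ha
        rcases List.mem_cons.mp ha with rfl | ha'
        · refine ⟨⟨round (r / 2), hb⟩, ?_⟩
          intro hb0
          rw [hb0] at ht
          simp at ht
          rw [ht] at habs1
          linarith
        · exact hL' a ha'
      · rw [cfVal_cons_some b hval' hs0]
        congr 1
        rw [one_div, inv_inv, ht]
        push_cast
        ring

/-- `p/q ∈ ℚ ∪ {∞}` admits an even continued fraction expansion iff
`p/q = ∞`, or `|p/q| ≥ 1` and at least one of `p`, `q` is even; moreover the expansion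
is always unique. -/
theorem even_cf_existence_and_uniqueness :
    (∀ x : Option ℚ,
      (∃ L : List ℤ, EvenCF L ∧ cfVal L = x) ↔
        (x = none ∨ ∃ r : ℚ, x = some r ∧ 1 ≤ |r| ∧ (Even r.num ∨ Even (r.den : ℤ)))) ∧
    (∀ L M : List ℤ, EvenCF L → EvenCF M → cfVal L = cfVal M → L = M) := by
  constructor
  · intro x
    constructor
    · rintro ⟨L, hL, rfl⟩
      cases L with
      | nil => left; rfl
      | cons b cs =>
        right
        obtain ⟨r, hr, h1, h2⟩ := evencf_val (b :: cs) hL (by simp)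
        exact ⟨r, hr, le_of_lt h1, h2⟩
    · rintro (rfl | ⟨r, rfl, h1, h2⟩)
      · exact ⟨[], fun a ha => absurd ha List.not_mem_nil, rfl⟩
      · have h1' : 1 < |r| := by
          rcases lt_or_eq_of_le h1 with h | h
          · exact h
          · exfalso
            rcases (abs_eq (by norm_num : (0:ℚ) ≤ 1)).mp h.symm with h2' | h2' <;>
              · rw [h2'] at h2; norm_num at h2
        obtain ⟨L, hL, hv⟩ := exists_evencf r.den r le_rfl h1' h2
        exact ⟨L, hL, hv⟩
  · exact evencf_unique
end

section
/- For any p/q ∈ ℚ (written with p ≥ 0, gcd(p,q) = 1) such that |p/q| > 1, exactly one of the two rationals p/q and p/(q − sgn(q)·p) admits a positive continued fraction expansion; that is, p/q has a positive continued fraction expansion if and only if p/(q − sgn(q)·p) does not. -/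
open scoped BigOperators

/-- Writing `y = p/q` with `p ≥ 0` and `gcd(p,q) = 1`, the rational `p/(q − sgn(q)·p)`. -/
def twist (y : ℚ) : ℚ :=
  ((y.num.natAbs : ℤ) : ℚ) /
    (((y.num.sign * (y.den : ℤ)) - (y.num.sign * (y.den : ℤ)).sign * (y.num.natAbs : ℤ) : ℤ) : ℚ)

/-- The map `p/q ↦ p/(q − sgn(q)·p)` on `ℚ ∪ {∞}` (with `∞ = 1/0`). -/
def twistO : Option ℚ → Option ℚ
  | none => none
  | some y =>
    if (y.num.sign * (y.den : ℤ)) - (y.num.sign * (y.den : ℤ)).sign * (y.num.natAbs : ℤ) = 0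
    then none
    else some (((y.num.natAbs : ℤ) : ℚ) /
      (((y.num.sign * (y.den : ℤ)) - (y.num.sign * (y.den : ℤ)).sign * (y.num.natAbs : ℤ) : ℤ) : ℚ))

/-- The map `p/q ↦ p/(q + p)` on `ℚ ∪ {∞}` (with `∞ = 1/0`, so `∞ = 1/0 ↦ 1/1 = 1`). -/
def pqPlus : Option ℚ → Option ℚ
  | none => some 1
  | some y =>
    if (y.num.sign * (y.den : ℤ)) + (y.num.natAbs : ℤ) = 0 then none
    else some (((y.num.natAbs : ℤ) : ℚ) /
      (((y.num.sign * (y.den : ℤ)) + (y.num.natAbs : ℤ) : ℤ) : ℚ))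

/-!
The values of positive continued fractions are exactly the rationals `≥ 1`: a positive
expansion has value `c + 1/y ≥ 1`, and conversely the Euclidean algorithm `x = ⌊x⌋ + 1/(fract x)⁻¹`
terminates because `(fract x)⁻¹` has smaller denominator than `x`. On the other hand
`twist x = x / (1 - |x|)`, which for `x > 1` is negative and for `x < -1` equals `x / (1 + x) > 1`.
-/

open Int

lemma cfVal_cons_of_eq_none {c : ℤ} {cs : List ℤ} (h : cfVal cs = none) :
    cfVal (c :: cs) = some (c : ℚ) := by
  simp [cfVal, h]

lemma cfVal_cons_of_eq_some {c : ℤ} {cs : List ℤ} {y : ℚ} (h : cfVal cs = some y) (hy : y ≠ 0) :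
    cfVal (c :: cs) = some (c + y⁻¹) := by
  simp [cfVal, h, hy]

lemma posCF_cons {a : ℤ} {L : List ℤ} : PosCF (a :: L) ↔ 1 ≤ a ∧ PosCF L :=
  List.forall_mem_cons

lemma one_le_of_cfVal_eq_some {L : List ℤ} (hL : PosCF L) {x : ℚ} (hx : cfVal L = some x) :
    1 ≤ x := by
  induction L generalizing x with
  | nil => simp [cfVal] at hx
  | cons c cs ih =>
    obtain ⟨hc, hcs⟩ := posCF_cons.mp hL
    have hc : (1 : ℚ) ≤ c := mod_cast hc
    cases htail : cfVal cs with
    | none =>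
      rw [cfVal_cons_of_eq_none htail, Option.some_inj] at hx
      exact hx ▸ hc
    | some y =>
      have hy : 1 ≤ y := ih hcs htail
      rw [cfVal_cons_of_eq_some htail (by positivity), Option.some_inj] at hx
      have : 0 < y⁻¹ := by positivity
      linarith

lemma den_inv_fract_lt {x : ℚ} (h : fract x ≠ 0) : (fract x)⁻¹.den < x.den := by
  have hpos : 0 < fract x := (fract_nonneg x).lt_of_ne' h
  have hnum : (fract x).num < (fract x).den := by
    have : ((fract x).num : ℚ) < (fract x).den := by
      rw [← Rat.mul_den_eq_num]
      exact mul_lt_of_lt_one_left (mod_cast (fract x).den_pos) (fract_lt_one x)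
    exact_mod_cast this
  rw [Rat.den_inv_of_ne_zero h, ← Rat.den_intFract x]
  have := Rat.num_pos.mpr hpos
  omega

lemma exists_posCF_of_one_le {x : ℚ} (hx : 1 ≤ x) : ∃ L, PosCF L ∧ cfVal L = some x := by
  induction hn : x.den using Nat.strong_induction_on generalizing x with
  | _ n ih =>
  have hfloor : 1 ≤ ⌊x⌋ := le_floor.mpr (mod_cast hx)
  by_cases hfr : fract x = 0
  · refine ⟨[⌊x⌋], posCF_cons.mpr ⟨hfloor, by simp [PosCF]⟩, ?_⟩
    rw [cfVal_cons_of_eq_none rfl, ← self_sub_fract, hfr, sub_zero]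
  · have hfr_pos : 0 < fract x := (fract_nonneg x).lt_of_ne' hfr
    obtain ⟨L, hL, hv⟩ := ih _ (hn ▸ den_inv_fract_lt hfr)
      (one_le_inv₀ hfr_pos |>.mpr (fract_lt_one x).le) rfl
    refine ⟨⌊x⌋ :: L, posCF_cons.mpr ⟨hfloor, hL⟩, ?_⟩
    rw [cfVal_cons_of_eq_some hv (inv_ne_zero hfr), inv_inv, floor_add_fract]

theorem exists_posCF_iff_one_le (x : ℚ) : (∃ L, PosCF L ∧ cfVal L = some x) ↔ 1 ≤ x :=
  ⟨fun ⟨_, hL, hx⟩ => one_le_of_cfVal_eq_some hL hx, exists_posCF_of_one_le⟩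

lemma div_one_sub_abs_eq (x : ℚ) : x / (1 - |x|) = x.num / (x.den - |(x.num : ℚ)|) := by
  have hd : (x.den : ℚ) ≠ 0 := mod_cast x.den_nz
  conv_lhs => rw [← Rat.num_div_den x]
  rw [abs_div, Nat.abs_cast, one_sub_div hd, div_div_div_cancel_right₀ hd]

lemma twist_eq_num_div (x : ℚ) : twist x = x.num / (x.den - |(x.num : ℚ)|) := by
  have hsd : (x.num.sign * (x.den : ℤ)).sign = x.num.sign := by
    rw [Int.sign_mul, Int.sign_natCast_of_ne_zero x.den_nz, mul_one, Int.sign_sign]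
  unfold twist
  rw [hsd, ← mul_sub, Int.natCast_natAbs, Int.cast_mul, ← div_div]
  push_cast
  congr 1
  rcases lt_trichotomy x.num 0 with hn | hn | hn
  · simp [Int.sign_eq_neg_one_of_neg hn, abs_of_neg (Int.cast_lt_zero.mpr hn)]
  · simp [hn]
  · simp [Int.sign_eq_one_of_pos hn, abs_of_pos (Int.cast_pos.mpr hn)]

theorem twist_eq (x : ℚ) : twist x = x / (1 - |x|) := by
  rw [twist_eq_num_div, div_one_sub_abs_eq]

/-- For `p/q ∈ ℚ` with `|p/q| > 1`, exactly one of `p/q` and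
`p/(q − sgn(q)·p)` admits a positive continued fraction expansion. -/
theorem positive_cf_iff_not_twist (x : ℚ) (hx : 1 < |x|) :
    (∃ L : List ℤ, PosCF L ∧ cfVal L = some x) ↔
      ¬ ∃ L : List ℤ, PosCF L ∧ cfVal L = some (twist x) := by
  rw [exists_posCF_iff_one_le, exists_posCF_iff_one_le, twist_eq]
  rcases lt_abs.mp hx with hx | hx
  · have : x / (1 - |x|) < 0 := div_neg_of_pos_of_neg (by linarith) (by linarith)
    constructor <;> intro <;> linarith
  · have hx' : x < 0 := by linarith
    rw [abs_of_neg hx', le_div_iff_of_neg (by linarith)]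
    constructor <;> intro <;> linarith
end

section
/- For each k ≥ 0, the map [a_1,…,a_n] ↦ isgn[a_1,…,a_n] is a bijection between positive continued fractions with ℓ_n = k + 2, considered up to the identity [c_1,…,c_m,1] = [c_1,…,c_m + 1], and the set {1,−1}^k. Consequently, the map sending p/q to the inner sign sequence of a positive continued fraction expansion of p/q is a well-defined bijection from {p/q ∈ ℚ : p/q > 1} onto the set ⋃_{k ≥ 0} {1,−1}^k of all finite sequences of signs. -/
open scoped BigOperators

/-- `ell L i = ℓ_i = |c₁| + ⋯ + |c_i|`. -/
def ell (L : List ℤ) (i : ℕ) : ℕ := ((L.take i).map Int.natAbs).sum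

/-- `typ L i = t_i = (−1)^(i−1)·sgn(c_i)` for `1 ≤ i ≤ n`, with the convention `t_0 = −1`. -/
def typ (L : List ℤ) (i : ℕ) : ℤ :=
  if i = 0 then -1 else (-1) ^ (i - 1) * Int.sign (L.getD (i - 1) 0)

/-- Auxiliary for the sign sequence, alternating the sign `s`. -/
def sgnAux : ℤ → List ℤ → List ℤ
  | _, [] => []
  | s, c :: cs => List.replicate c.natAbs (s * Int.sign c) ++ sgnAux (-s) cs

/-- The sign sequence `sgn[c₁,…,cₙ]`: `t₁` repeated `|c₁|` times, …, `tₙ` repeated `|cₙ|` times. -/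
def signSeq (L : List ℤ) : List ℤ := sgnAux 1 L

/-- The inner sign sequence: the sign sequence with first and last entries deleted. -/
def isgn (L : List ℤ) : List ℤ := (signSeq L).tail.dropLast

/-- Two lists are related by the identity `[c₁,…,c_m,1] = [c₁,…,c_m + 1]`. -/
def lastOneRel (L M : List ℤ) : Prop :=
  ∃ (P : List ℤ) (c : ℤ),
    (L = P ++ [c, 1] ∧ M = P ++ [c + 1]) ∨ (M = P ++ [c, 1] ∧ L = P ++ [c + 1])

/-!
For a positive continued fraction the sign sequence is a run-length code: runs of lengths
`a₁, …, aₙ` with alternating signs, starting with `+1`. Hence `signSeq` is injective on positive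
continued fractions and hits every `±1`-word beginning with `1`. As the first sign is always `1`,
`isgn L` determines the sign sequence of the fraction obtained from `L` by deleting its last sign,
and `L` is one of the two ways of adding that sign back, `P ++ [c, 1]` or `P ++ [c + 1]`, which
have the same value. On the rational side, Euclid's algorithm shows that each `x > 1` has exactly
one expansion with last term at least `2`, read off from `⌊x⌋` and `Int.fract x`, and every
positive expansion of `x` is reduced to it by the same identity.
-/

section SignSequence

variable {s c : ℤ} {L M P : List ℤ}

theorem ell_length (L : List ℤ) : ell L L.length = (L.map Int.natAbs).sum := by
  simp [ell]

theorem length_sgnAux (s : ℤ) (L : List ℤ) : (sgnAux s L).length = (L.map Int.natAbs).sum := by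
  induction L generalizing s with
  | nil => rfl
  | cons c L ih => simp [sgnAux, ih]

theorem length_signSeq (L : List ℤ) : (signSeq L).length = ell L L.length := by
  rw [ell_length, signSeq, length_sgnAux]

theorem sgnAux_append (s : ℤ) (P Q : List ℤ) :
    sgnAux s (P ++ Q) = sgnAux s P ++ sgnAux ((-1) ^ P.length * s) Q := by
  induction P generalizing s with
  | nil => simp [sgnAux]
  | cons c P ih => simp [sgnAux, ih, pow_succ]

theorem PosCF.of_cons (hL : PosCF (c :: L)) : PosCF L :=
  fun a ha => hL a (List.mem_cons_of_mem c ha)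

theorem PosCF.cons (hc : 1 ≤ c) (hL : PosCF L) : PosCF (c :: L) := by
  intro a ha
  rcases List.mem_cons.mp ha with rfl | ha
  exacts [hc, hL a ha]

theorem PosCF.of_append_left (hL : PosCF (L ++ M)) : PosCF L :=
  fun a ha => hL a (List.mem_append_left M ha)

theorem PosCF.append_singleton (hL : PosCF L) (hc : 1 ≤ c) : PosCF (L ++ [c]) := by
  intro a ha
  rcases List.mem_append.mp ha with ha | ha
  · exact hL a ha
  · rwa [List.mem_singleton.mp ha]

theorem sgnAux_cons_of_pos (hc : 0 < c) :
    sgnAux s (c :: L) = List.replicate c.natAbs s ++ sgnAux (-s) L := by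
  rw [sgnAux, Int.sign_eq_one_of_pos hc, mul_one]

theorem sgnAux_one_cons : sgnAux s (1 :: L) = s :: sgnAux (-s) L := by
  simp [sgnAux]

theorem sgnAux_add_one_cons (hc : 1 ≤ c) : sgnAux s ((c + 1) :: L) = s :: sgnAux s (c :: L) := by
  rw [sgnAux_cons_of_pos (by omega), sgnAux_cons_of_pos (by omega),
    show (c + 1).natAbs = c.natAbs + 1 by omega, List.replicate_succ, List.cons_append]

theorem mem_sgnAux (hL : PosCF L) {x : ℤ} (hx : x ∈ sgnAux s L) : x = s ∨ x = -s := by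
  induction L generalizing s with
  | nil => simp [sgnAux] at hx
  | cons c L ih =>
    rw [sgnAux_cons_of_pos (hL c (by simp))] at hx
    rcases List.mem_append.mp hx with hx | hx
    · exact Or.inl (List.eq_of_mem_replicate hx)
    · rcases ih hL.of_cons hx with h | h <;> omega

theorem head?_sgnAux (hL : PosCF L) (hne : L ≠ []) : (sgnAux s L).head? = some s := by
  obtain ⟨c, L, rfl⟩ := List.exists_cons_of_ne_nil hne
  have hc : 1 ≤ c := hL c (by simp)
  obtain rfl | hc := eq_or_lt_of_le hc
  · rw [sgnAux_one_cons, List.head?_cons]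
  · rw [show c = (c - 1) + 1 by ring, sgnAux_add_one_cons (by omega), List.head?_cons]

theorem sgnAux_eq_nil_iff (hL : PosCF L) : sgnAux s L = [] ↔ L = [] := by
  refine ⟨fun h => ?_, fun h => by rw [h]; rfl⟩
  by_contra hne
  simpa [h] using head?_sgnAux (s := s) hL hne

theorem sgnAux_neg_ne (hs : s ≠ 0) (hL : PosCF L) (hM : PosCF M) (hM0 : M ≠ []) :
    sgnAux (-s) L ≠ sgnAux s M := by
  intro h
  have hL0 : L ≠ [] := by
    rintro rfl
    exact hM0 ((sgnAux_eq_nil_iff hM).mp (by rw [← h]; rfl))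
  have := head?_sgnAux (s := -s) hL hL0
  rw [h, head?_sgnAux hM hM0, Option.some_inj] at this
  omega

theorem eq_of_sgnAux_eq (hs : s ≠ 0) (hL : PosCF L) (hM : PosCF M)
    (h : sgnAux s L = sgnAux s M) : L = M := by
  obtain ⟨n, hn⟩ : ∃ n, (sgnAux s L).length = n := ⟨_, rfl⟩
  induction n generalizing s L M with
  | zero =>
    rw [List.length_eq_zero_iff] at hn
    rw [(sgnAux_eq_nil_iff hL).mp hn, (sgnAux_eq_nil_iff hM).mp (h ▸ hn)]
  | succ n ih =>
    have hL0 : L ≠ [] := by rintro rfl; simp [sgnAux] at hn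
    have hM0 : M ≠ [] := fun hM0 => hL0 ((sgnAux_eq_nil_iff hL).mp (by rw [h, hM0]; rfl))
    obtain ⟨c, L, rfl⟩ := List.exists_cons_of_ne_nil hL0
    obtain ⟨d, M, rfl⟩ := List.exists_cons_of_ne_nil hM0
    have hc : 1 ≤ c := hL c (by simp)
    have hd : 1 ≤ d := hM d (by simp)
    obtain rfl | hc := eq_or_lt_of_le hc <;> obtain rfl | hd := eq_or_lt_of_le hd
    · rw [sgnAux_one_cons, sgnAux_one_cons, List.cons.injEq] at h
      rw [sgnAux_one_cons, List.length_cons] at hn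
      rw [ih (neg_ne_zero.mpr hs) hL.of_cons hM.of_cons h.2 (by omega)]
    · obtain ⟨d, rfl⟩ : ∃ d', d = d' + 1 := ⟨d - 1, by ring⟩
      rw [sgnAux_one_cons, sgnAux_add_one_cons (by omega), List.cons.injEq] at h
      exact absurd h.2
        (sgnAux_neg_ne hs hL.of_cons (hM.of_cons.cons (by omega)) (List.cons_ne_nil _ _))
    · obtain ⟨c, rfl⟩ : ∃ c', c = c' + 1 := ⟨c - 1, by ring⟩
      rw [sgnAux_one_cons, sgnAux_add_one_cons (by omega), List.cons.injEq] at h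
      exact absurd h.2.symm
        (sgnAux_neg_ne hs hM.of_cons (hL.of_cons.cons (by omega)) (List.cons_ne_nil _ _))
    · obtain ⟨c, rfl⟩ : ∃ c', c = c' + 1 := ⟨c - 1, by ring⟩
      obtain ⟨d, rfl⟩ : ∃ d', d = d' + 1 := ⟨d - 1, by ring⟩
      rw [sgnAux_add_one_cons (by omega), sgnAux_add_one_cons (by omega), List.cons.injEq] at h
      rw [sgnAux_add_one_cons (by omega), List.length_cons] at hn
      obtain ⟨rfl, rfl⟩ := List.cons.inj
        (ih hs (hL.of_cons.cons (by omega)) (hM.of_cons.cons (by omega)) h.2 (by omega))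
      rfl

theorem exists_posCF_sgnAux_eq_cons (s : ℤ) (τ : List ℤ) (hτ : ∀ x ∈ τ, x = s ∨ x = -s) :
    ∃ L, PosCF L ∧ sgnAux s L = s :: τ := by
  induction τ generalizing s with
  | nil => exact ⟨[1], PosCF.cons le_rfl fun _ => by simp, by simp [sgnAux]⟩
  | cons a τ ih =>
    have ha := hτ a List.mem_cons_self
    have hτ' : ∀ x ∈ τ, x = a ∨ x = -a := fun x hx => by
      rcases hτ x (List.mem_cons_of_mem a hx) with h | h <;> omega
    obtain ⟨L, hL, hLτ⟩ := ih a hτ'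
    rcases ha with rfl | rfl
    · have hL0 : L ≠ [] := by rintro rfl; simp [sgnAux] at hLτ
      obtain ⟨c, L, rfl⟩ := List.exists_cons_of_ne_nil hL0
      have hc : 1 ≤ c := hL c (by simp)
      exact ⟨(c + 1) :: L, hL.of_cons.cons (by omega), by rw [sgnAux_add_one_cons hc, hLτ]⟩
    · exact ⟨1 :: L, hL.cons le_rfl, by rw [sgnAux_one_cons, hLτ]⟩

theorem signSeq_append_one (L : List ℤ) : signSeq (L ++ [1]) = signSeq L ++ [(-1) ^ L.length] := by
  simp [signSeq, sgnAux_append, sgnAux]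

theorem signSeq_append_add_one (P : List ℤ) (hc : 1 ≤ c) :
    signSeq (P ++ [c + 1]) = signSeq (P ++ [c]) ++ [(-1) ^ P.length] := by
  simp only [signSeq, sgnAux_append, sgnAux, List.append_nil, List.append_assoc]
  rw [Int.sign_eq_one_of_pos (by omega), Int.sign_eq_one_of_pos (by omega),
    show (c + 1).natAbs = c.natAbs + 1 by omega, List.replicate_succ']
  simp

theorem signSeq_eq_one_cons_isgn (hM : PosCF M) (hM0 : M ≠ []) {t : ℤ}
    (h : signSeq L = signSeq M ++ [t]) : signSeq M = 1 :: isgn L := by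
  have hhead : (signSeq M).head? = some 1 := head?_sgnAux hM hM0
  rw [isgn, h, List.tail_append_of_ne_nil (by rintro h0; simp [h0] at hhead), List.dropLast_concat]
  exact (List.cons_head?_tail hhead).symm

theorem exists_signSeq_eq_one_cons_isgn (hL : PosCF L) (h2 : 2 ≤ ell L L.length) :
    ∃ P c, PosCF (P ++ [c]) ∧ signSeq (P ++ [c]) = 1 :: isgn L ∧
      (L = P ++ [c, 1] ∨ L = P ++ [c + 1]) := by
  obtain rfl | ⟨P, c, rfl⟩ := L.eq_nil_or_concat'
  · simp [ell] at h2
  have hP := hL.of_append_left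
  have hc : 1 ≤ c := hL c (by simp)
  obtain rfl | hc := eq_or_lt_of_le hc
  · obtain rfl | ⟨Q, d, rfl⟩ := P.eq_nil_or_concat'
    · simp [ell] at h2
    exact ⟨Q, d, hP, signSeq_eq_one_cons_isgn hP (by simp) (signSeq_append_one _),
      Or.inl (by simp)⟩
  · obtain ⟨c, rfl⟩ : ∃ c', c = c' + 1 := ⟨c - 1, by ring⟩
    have hPc : PosCF (P ++ [c]) := hP.append_singleton (by omega)
    exact ⟨P, c, hPc, signSeq_eq_one_cons_isgn hPc (by simp)
      (signSeq_append_add_one P (by omega)), Or.inr rfl⟩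

theorem isgn_append_pair_one (hP : PosCF P) (hc : 1 ≤ c) :
    isgn (P ++ [c, 1]) = isgn (P ++ [c + 1]) := by
  have hPc := hP.append_singleton hc
  have h1 := signSeq_eq_one_cons_isgn (L := P ++ [c, 1]) hPc (by simp)
    (by simpa using signSeq_append_one (P ++ [c]))
  have h2 := signSeq_eq_one_cons_isgn hPc (by simp) (signSeq_append_add_one P hc)
  exact (List.cons.inj (h1.symm.trans h2)).2

theorem length_isgn_add_two (h2 : 2 ≤ ell L L.length) : (isgn L).length + 2 = ell L L.length := by
  rw [isgn, List.length_dropLast, List.length_tail, length_signSeq]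
  omega

theorem mem_isgn (hL : PosCF L) {x : ℤ} (hx : x ∈ isgn L) : x = 1 ∨ x = -1 :=
  mem_sgnAux hL (((List.dropLast_sublist _).trans (List.tail_sublist _)).mem hx)

theorem exists_posCF_isgn_eq (σ : List ℤ) (hσ : ∀ s ∈ σ, s = 1 ∨ s = -1) :
    ∃ L, PosCF L ∧ ell L L.length = σ.length + 2 ∧ isgn L = σ := by
  obtain ⟨L, hL, hLσ⟩ :=
    exists_posCF_sgnAux_eq_cons 1 (σ ++ [1]) (by simpa [or_imp, forall_and] using hσ)
  refine ⟨L, hL, ?_, ?_⟩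
  · rw [← length_signSeq, signSeq, hLσ]
    simp
  · rw [isgn, signSeq, hLσ, List.tail_cons, List.dropLast_concat]

theorem eq_or_lastOneRel_of_isgn_eq (hL : PosCF L) (hM : PosCF M) (h2L : 2 ≤ ell L L.length)
    (h2M : 2 ≤ ell M M.length) (h : isgn L = isgn M) : L = M ∨ lastOneRel L M := by
  obtain ⟨P, c, hPc, hPcL, hL'⟩ := exists_signSeq_eq_one_cons_isgn hL h2L
  obtain ⟨Q, d, hQd, hQdM, hM'⟩ := exists_signSeq_eq_one_cons_isgn hM h2M
  obtain ⟨rfl, hcd⟩ := List.append_inj' (eq_of_sgnAux_eq one_ne_zero hPc hQd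
    (hPcL.trans (h ▸ hQdM.symm))) rfl
  obtain rfl : c = d := List.singleton_inj.mp hcd
  rcases hL' with rfl | rfl <;> rcases hM' with rfl | rfl
  exacts [Or.inl rfl, Or.inr ⟨P, c, Or.inl ⟨rfl, rfl⟩⟩, Or.inr ⟨P, c, Or.inr ⟨rfl, rfl⟩⟩,
    Or.inl rfl]

end SignSequence

section Value

variable {c : ℤ} {L M : List ℤ}

theorem cfVal_cons_of_eq_some_s3 (c : ℤ) {x : ℚ} (h : cfVal L = some x) (hx : x ≠ 0) :
    cfVal (c :: L) = some (c + x⁻¹) := by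
  simp [cfVal, h, hx]

theorem cfVal_append_congr (P : List ℤ) (h : cfVal L = cfVal M) :
    cfVal (P ++ L) = cfVal (P ++ M) := by
  induction P with
  | nil => exact h
  | cons p P ih => rw [List.cons_append, List.cons_append, cfVal, cfVal, ih]

theorem cfVal_append_pair_one (P : List ℤ) (c : ℤ) :
    cfVal (P ++ [c, 1]) = cfVal (P ++ [c + 1]) :=
  cfVal_append_congr P (by simp [cfVal])

theorem cfVal_eq_of_lastOneRel (h : lastOneRel L M) : cfVal L = cfVal M := by
  obtain ⟨P, c, ⟨rfl, rfl⟩ | ⟨rfl, rfl⟩⟩ := h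
  exacts [cfVal_append_pair_one P c, (cfVal_append_pair_one P c).symm]

def IsCanonicalCF (L : List ℤ) : Prop := PosCF L ∧ ∃ c ∈ L.getLast?, 2 ≤ c

theorem IsCanonicalCF.ne_nil (hL : IsCanonicalCF L) : L ≠ [] := by
  rintro rfl
  simp [IsCanonicalCF] at hL

theorem IsCanonicalCF.cons (hc : 1 ≤ c) (hL : IsCanonicalCF L) : IsCanonicalCF (c :: L) := by
  obtain ⟨d, L, rfl⟩ := List.exists_cons_of_ne_nil hL.ne_nil
  exact ⟨hL.1.cons hc, by simpa using hL.2⟩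

theorem IsCanonicalCF.of_cons (h : IsCanonicalCF (c :: L)) (hL : L ≠ []) : IsCanonicalCF L := by
  obtain ⟨d, L, rfl⟩ := List.exists_cons_of_ne_nil hL
  exact ⟨h.1.of_cons, by simpa using h.2⟩

theorem IsCanonicalCF.one_lt_cfVal (hL : IsCanonicalCF L) : ∃ q, cfVal L = some q ∧ 1 < q := by
  induction L with
  | nil => exact absurd rfl hL.ne_nil
  | cons c L ih =>
    rcases eq_or_ne L [] with rfl | hL0
    · obtain ⟨d, hd, h2⟩ := hL.2
      obtain rfl : c = d := by simpa using hd
      exact ⟨c, rfl, by exact_mod_cast h2⟩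
    · obtain ⟨q, hq, hq1⟩ := ih (hL.of_cons hL0)
      have hc : (1 : ℚ) ≤ c := by exact_mod_cast hL.1 c (by simp)
      refine ⟨c + q⁻¹, cfVal_cons_of_eq_some_s3 c hq (by positivity), ?_⟩
      have : 0 < q⁻¹ := by positivity
      linarith

theorem IsCanonicalCF.floor_fract_cfVal_cons (h : IsCanonicalCF (c :: L)) {q : ℚ}
    (hq : cfVal (c :: L) = some q) :
    ⌊q⌋ = c ∧ (L = [] ↔ Int.fract q = 0) ∧ (L ≠ [] → cfVal L = some (Int.fract q)⁻¹) := by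
  rcases eq_or_ne L [] with rfl | hL
  · obtain rfl : (c : ℚ) = q := Option.some_inj.mp hq
    simp
  · obtain ⟨q', hq', hq'1⟩ := (h.of_cons hL).one_lt_cfVal
    rw [cfVal_cons_of_eq_some_s3 c hq' (by positivity), Option.some_inj] at hq
    subst hq
    have h0 : 0 < q'⁻¹ := by positivity
    have h1 : q'⁻¹ < 1 := inv_lt_one_of_one_lt₀ hq'1
    rw [Int.floor_intCast_add, Int.fract_intCast_add, Int.floor_eq_zero_iff.mpr ⟨h0.le, h1⟩,
      Int.fract_eq_self.mpr ⟨h0.le, h1⟩, inv_inv]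
    exact ⟨add_zero c, iff_of_false hL h0.ne', fun _ => hq'⟩

theorem IsCanonicalCF.eq_of_cfVal_eq (hL : IsCanonicalCF L) (hM : IsCanonicalCF M)
    (h : cfVal L = cfVal M) : L = M := by
  induction L generalizing M with
  | nil => exact absurd rfl hL.ne_nil
  | cons c L ih =>
    obtain ⟨d, M, rfl⟩ := List.exists_cons_of_ne_nil hM.ne_nil
    obtain ⟨q, hq, -⟩ := hL.one_lt_cfVal
    obtain ⟨hc, hL0, hLv⟩ := hL.floor_fract_cfVal_cons hq
    obtain ⟨hd, hM0, hMv⟩ := hM.floor_fract_cfVal_cons (h ▸ hq)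
    obtain rfl : c = d := hc.symm.trans hd
    by_cases hf : Int.fract q = 0
    · rw [hL0.mpr hf, hM0.mpr hf]
    · have hL0 : L ≠ [] := mt hL0.mp hf
      have hM0 : M ≠ [] := mt hM0.mp hf
      rw [ih (hL.of_cons hL0) (hM.of_cons hM0) ((hLv hL0).trans (hMv hM0).symm)]

theorem exists_isCanonicalCF_cfVal_eq (x : ℚ) (hx : 1 < x) :
    ∃ L, IsCanonicalCF L ∧ cfVal L = some x := by
  obtain ⟨n, hn⟩ : ∃ n, (Int.fract x).num.toNat = n := ⟨_, rfl⟩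
  induction n using Nat.strong_induction_on generalizing x with
  | _ n ih =>
    have hc : 1 ≤ ⌊x⌋ := Int.le_floor.mpr (by exact_mod_cast hx.le)
    by_cases hf : Int.fract x = 0
    · have hxc : (⌊x⌋ : ℚ) = x := by simpa [hf] using Int.floor_add_fract x
      have hc2 : 2 ≤ ⌊x⌋ := by
        have : (1 : ℚ) < ⌊x⌋ := hxc ▸ hx
        exact_mod_cast this
      exact ⟨[⌊x⌋], ⟨(PosCF.cons hc fun _ => by simp), ⌊x⌋, rfl, hc2⟩, by rw [← hxc]; rfl⟩
    · have hf0 : 0 < Int.fract x := (Int.fract_nonneg x).lt_of_ne' hf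
      have hy : 1 < (Int.fract x)⁻¹ := (one_lt_inv₀ hf0).mpr (Int.fract_lt_one x)
      have hlt := Rat.fract_inv_num_lt_num_of_pos hf0
      have hnn : 0 ≤ (Int.fract (Int.fract x)⁻¹).num := Rat.num_nonneg.mpr (Int.fract_nonneg _)
      obtain ⟨M, hM, hMv⟩ := ih _ (by omega) _ hy rfl
      refine ⟨⌊x⌋ :: M, hM.cons hc, ?_⟩
      rw [cfVal_cons_of_eq_some_s3 _ hMv (by positivity), inv_inv, Int.floor_add_fract]

theorem exists_isCanonicalCF_of_posCF (hL : PosCF L) (h2 : 2 ≤ ell L L.length) :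
    ∃ C, IsCanonicalCF C ∧ cfVal C = cfVal L ∧ isgn C = isgn L := by
  obtain ⟨P, c, hPc, -, rfl | rfl⟩ := exists_signSeq_eq_one_cons_isgn hL h2
  all_goals
    have hc : 1 ≤ c := hPc c (by simp)
    have hC : IsCanonicalCF (P ++ [c + 1]) :=
      ⟨hPc.of_append_left.append_singleton (by omega), c + 1, by simp, by omega⟩
  · exact ⟨_, hC, (cfVal_append_pair_one P c).symm,
      (isgn_append_pair_one hPc.of_append_left hc).symm⟩
  · exact ⟨_, hC, rfl, rfl⟩

theorem two_le_ell_of_cfVal_eq (hL : PosCF L) {x : ℚ} (hLx : cfVal L = some x) (hx : 1 < x) :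
    2 ≤ ell L L.length := by
  rw [ell_length]
  rcases L with _ | ⟨c, _ | ⟨d, L⟩⟩
  · simp [cfVal] at hLx
  · obtain rfl : (c : ℚ) = x := Option.some_inj.mp hLx
    have : 1 < c := by exact_mod_cast hx
    simp only [List.map_cons, List.map_nil, List.sum_cons, List.sum_nil]
    omega
  · have hc : 1 ≤ c := hL c (by simp)
    have hd : 1 ≤ d := hL d (by simp)
    simp only [List.map_cons, List.sum_cons]
    omega

theorem isgn_eq_of_cfVal_eq (hL : PosCF L) (hM : PosCF M) {x : ℚ} (hx : 1 < x)
    (hLx : cfVal L = some x) (hMx : cfVal M = some x) : isgn L = isgn M := by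
  obtain ⟨C, hC, hCv, hCi⟩ := exists_isCanonicalCF_of_posCF hL (two_le_ell_of_cfVal_eq hL hLx hx)
  obtain ⟨D, hD, hDv, hDi⟩ := exists_isCanonicalCF_of_posCF hM (two_le_ell_of_cfVal_eq hM hMx hx)
  rw [← hCi, ← hDi, hC.eq_of_cfVal_eq hD (by rw [hCv, hDv, hLx, hMx])]

theorem exists_bijective_isgn :
    ∃ f : {x : ℚ // 1 < x} → {σ : List ℤ // ∀ s ∈ σ, s = 1 ∨ s = -1},
      Function.Bijective f ∧
      ∀ (x : {x : ℚ // 1 < x}) (L : List ℤ), PosCF L → cfVal L = some x.val →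
        isgn L = (f x).val := by
  choose E hE hEx using fun x : {x : ℚ // 1 < x} => exists_isCanonicalCF_cfVal_eq x.1 x.2
  have hE2 : ∀ x, 2 ≤ ell (E x) (E x).length :=
    fun x => two_le_ell_of_cfVal_eq (hE x).1 (hEx x) x.2
  have compat : ∀ (x : {x : ℚ // 1 < x}) L, PosCF L → cfVal L = some x.val →
      isgn L = isgn (E x) := fun x _ hL hLx => isgn_eq_of_cfVal_eq hL (hE x).1 x.2 hLx (hEx x)
  refine ⟨fun x => ⟨isgn (E x), fun _ => mem_isgn (hE x).1⟩, ⟨fun x y hxy => ?_, fun σ => ?_⟩,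
    compat⟩
  · have hv : cfVal (E x) = cfVal (E y) :=
      (eq_or_lastOneRel_of_isgn_eq (hE x).1 (hE y).1 (hE2 x) (hE2 y)
        (congrArg Subtype.val hxy)).elim (congrArg cfVal) cfVal_eq_of_lastOneRel
    rw [hEx, hEx, Option.some_inj] at hv
    exact Subtype.ext hv
  · obtain ⟨L, hL, hLell, hLσ⟩ := exists_posCF_isgn_eq σ.1 σ.2
    obtain ⟨C, hC, hCv, -⟩ := exists_isCanonicalCF_of_posCF hL (by omega)
    obtain ⟨q, hq, hq1⟩ := hC.one_lt_cfVal
    exact ⟨⟨q, hq1⟩, Subtype.ext ((compat _ L hL (hCv ▸ hq)).symm.trans hLσ)⟩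

end Value

/-- The inner sign sequence gives, for each `k ≥ 0`, a bijection between
positive continued fractions with `ℓₙ = k + 2` (up to the identity
`[c₁,…,c_m,1] = [c₁,…,c_m+1]`) and `{1,−1}^k`; consequently `p/q ↦ isgn` of an expansion
is a well-defined bijection from `{p/q ∈ ℚ : p/q > 1}` onto all finite sign sequences. -/
theorem isgn_bijection :
    (∀ L : List ℤ, PosCF L → 2 ≤ ell L L.length →
      (isgn L).length + 2 = ell L L.length ∧ ∀ s ∈ isgn L, s = 1 ∨ s = -1) ∧
    (∀ σ : List ℤ, (∀ s ∈ σ, s = 1 ∨ s = -1) →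
      ∃ L : List ℤ, PosCF L ∧ ell L L.length = σ.length + 2 ∧ isgn L = σ) ∧
    (∀ L M : List ℤ, PosCF L → PosCF M → 2 ≤ ell L L.length → 2 ≤ ell M M.length →
      isgn L = isgn M → L = M ∨ lastOneRel L M) ∧
    (∃ f : {x : ℚ // 1 < x} → {σ : List ℤ // ∀ s ∈ σ, s = 1 ∨ s = -1},
      Function.Bijective f ∧
      ∀ (x : {x : ℚ // 1 < x}) (L : List ℤ), PosCF L → cfVal L = some x.val →
        isgn L = (f x).val) :=
  ⟨fun _ hL h2 => ⟨length_isgn_add_two h2, fun _ => mem_isgn hL⟩, exists_posCF_isgn_eq,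
    fun _ _ hL hM h2L h2M => eq_or_lastOneRel_of_isgn_eq hL hM h2L h2M, exists_bijective_isgn⟩
end

section
/- Let a_1,…,a_k be integers with a_i ≥ 1 for all i and a_k ≥ 2, and let c_{k+1},…,c_n be integers with c_{k+1} ≤ −2. Then, as elements of ℚ ∪ {∞}, [a_1,…,a_k,c_{k+1},c_{k+2},…,c_n] = [a_1,…,a_{k−1}, a_k − 1, 1, −c_{k+1} − 1, −c_{k+2},…, −c_n]. -/
open scoped BigOperators

/-- One step of the continued fraction recursion, on values. -/
def cfStep (h : ℚ) : Option ℚ → Option ℚ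
  | none => some h
  | some x => if x = 0 then none else some (h + 1 / x)

lemma cfVal_cons (c : ℤ) (cs : List ℤ) : cfVal (c :: cs) = cfStep (c : ℚ) (cfVal cs) := by
  cases h : cfVal cs <;> simp [cfVal, cfStep, h]

lemma cfVal_map_neg (L : List ℤ) :
    cfVal (L.map (fun x => -x)) = Option.map (fun r => -r) (cfVal L) := by
  induction L with
  | nil => rfl
  | cons c cs ih =>
    simp only [List.map_cons, cfVal_cons, ih]
    cases h : cfVal cs with
    | none => simp [cfStep]
    | some x =>
      simp only [Option.map_some]
      by_cases hx : x = 0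
      · simp [cfStep, hx]
      · have hnx : (-x : ℚ) ≠ 0 := by simpa using hx
        simp only [cfStep, if_neg hx, if_neg hnx, Option.map_some]
        congr 1
        push_cast
        field_simp
        ring

lemma cf_step (a c : ℤ) (cs : List ℤ) :
    cfVal (a :: c :: cs) = cfVal ((a - 1) :: 1 :: (-c - 1) :: cs.map (fun x => -x)) := by
  rw [cfVal_cons a, cfVal_cons c, cfVal_cons (a-1), cfVal_cons 1, cfVal_cons (-c-1),
    cfVal_map_neg]
  push_cast
  cases h : cfVal cs with
  | none =>
    simp only [Option.map_none]
    by_cases hc1 : (c : ℚ) = -1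
    · have h0 : (-(c:ℚ) - 1) = 0 := by rw [hc1]; ring
      have hcne : (c : ℚ) ≠ 0 := by rw [hc1]; norm_num
      simp only [cfStep, if_pos h0, if_neg hcne]
      rw [hc1]; congr 1; ring
    · have h0 : (-(c:ℚ) - 1) ≠ 0 := fun h => hc1 (by linarith)
      have hc1' : (c : ℚ) + 1 ≠ 0 := fun h => hc1 (by linarith)
      have hw : (1 : ℚ) + 1 / (-(c:ℚ) - 1) = (c : ℚ) / ((c : ℚ) + 1) := by
        field_simp; ring
      simp only [cfStep, if_neg h0, hw]
      by_cases hc0 : (c : ℚ) = 0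
      · simp [hc0]
      · have hwne : ((c : ℚ) / ((c : ℚ) + 1)) ≠ 0 := div_ne_zero hc0 hc1'
        simp only [if_neg hwne, if_neg hc0]
        congr 1
        field_simp
        ring
  | some x =>
    simp only [Option.map_some]
    by_cases hx : x = 0
    · have hnx : (-x : ℚ) = 0 := by rw [hx]; ring
      simp [cfStep, hx, hnx]
    · have hnx : (-x : ℚ) ≠ 0 := by simpa using hx
      set v : ℚ := (c : ℚ) + 1 / x with hv
      have hu : (-(c:ℚ) - 1) + 1 / (-x) = -(v + 1) := by
        rw [hv]; field_simp; ring
      simp only [cfStep, if_neg hx, if_neg hnx, hu]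
      rw [← hv]
      by_cases hv1 : v = -1
      · have h0 : (-(v + 1) : ℚ) = 0 := by rw [hv1]; ring
        have hvne : v ≠ 0 := by rw [hv1]; norm_num
        simp only [if_pos h0, if_neg hvne]
        rw [hv1]; congr 1; ring
      · have h0 : (-(v + 1) : ℚ) ≠ 0 := fun h => hv1 (by linarith)
        have hv1' : v + 1 ≠ 0 := fun h => hv1 (by linarith)
        have h0' : (-1 + -v : ℚ) ≠ 0 := fun h => hv1' (by linarith)
        have hw : (1 : ℚ) + 1 / (-(v + 1)) = v / (v + 1) := by
          field_simp [h0']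
          ring
        simp only [if_neg h0, hw]
        by_cases hv0 : v = 0
        · simp [hv0]
        · have hwne : (v / (v + 1)) ≠ 0 := div_ne_zero hv0 hv1'
          simp only [if_neg hwne, if_neg hv0]
          congr 1
          field_simp
          ring

lemma cfVal_append_congr_s8 (B : List ℤ) {L1 L2 : List ℤ} (h : cfVal L1 = cfVal L2) :
    cfVal (B ++ L1) = cfVal (B ++ L2) := by
  induction B with
  | nil => exact h
  | cons b B ih => rw [List.cons_append, List.cons_append, cfVal_cons, cfVal_cons, ih]

/-- For integers `a₁,…,a_k ≥ 1` with `a_k ≥ 2` and integers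
`c_{k+1},…,cₙ` with `c_{k+1} ≤ −2`, one has
`[a₁,…,a_k,c_{k+1},…,cₙ] = [a₁,…,a_{k−1}, a_k − 1, 1, −c_{k+1} − 1, −c_{k+2},…,−cₙ]`
in `ℚ ∪ {∞}`. -/
theorem cf_identity (A : List ℤ) (hA : A ≠ []) (hApos : ∀ a ∈ A, 1 ≤ a)
    (hAk : 2 ≤ A.getLast hA) (c : ℤ) (hc : c ≤ -2) (cs : List ℤ) :
    cfVal (A ++ c :: cs) =
      cfVal (A.dropLast ++ (A.getLast hA - 1) :: 1 :: (-c - 1) :: cs.map (fun x => -x)) := by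
  have hsplit : A ++ c :: cs = A.dropLast ++ A.getLast hA :: c :: cs := by
    conv_lhs => rw [← A.dropLast_append_getLast hA]
    simp
  rw [hsplit]
  exact cfVal_append_congr_s8 _ (cf_step _ c cs)
end

section
/- Let [b_1,…,b_n] be any even continued fraction and let 1 < m ≤ n. Then (i) φ_P(F(S_m)) = (1 − q^{−1})·(1 + l² + l⁴ + ⋯ + l^{|b_m|−2}), and (ii) Π_{i∈S_m} φ_P(y_i) = −l^{|b_m|−2}·q^{−1}, as elements of K = ℚ(l,s) with q = s². -/
open scoped BigOperators

/-- The conditions of Definition 3.5: every `|c_i| ≥ 1` (i.e. `c_i ≠ 0`), and whenever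
`t_i = t_{i+1}` both `|c_i| > 1` and `|c_{i+1}| > 1`. -/
def QCond (L : List ℤ) : Prop :=
  (∀ c ∈ L, c ≠ 0) ∧
  ∀ i : ℕ, 1 ≤ i → i + 1 ≤ L.length → typ L i = typ L (i + 1) →
    1 < (L.getD (i - 1) 0).natAbs ∧ 1 < (L.getD i 0).natAbs

/-- `v` is a label of the labeled path poset `Q[c₁,…,cₙ]`: `1 ≤ v ≤ ℓₙ − 1`, and `v` is not
one of the removed labels `ℓ_i` with `t_i = t_{i+1}`. -/
def kept (L : List ℤ) (v : ℕ) : Prop :=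
  1 ≤ v ∧ v < ell L L.length ∧
  ∀ i ∈ Finset.Ico 1 L.length, typ L i = typ L (i + 1) → v ≠ ell L i

open Classical in
/-- The underlying label set of `Q[c₁,…,cₙ]`. -/
noncomputable def QFinset (L : List ℤ) : Finset ℕ :=
  (Finset.Ioo 0 (ell L L.length)).filter (kept L)

/-- The index `i` of the segment `(ℓ_{i−1}, ℓ_i]` containing the label `v`. -/
def seg (L : List ℤ) (v : ℕ) : ℕ :=
  1 + ((Finset.range L.length).filter (fun i => ell L (i + 1) < v)).card

/-- `u < v` are consecutive labels of `Q[c₁,…,cₙ]`. -/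
def consec (L : List ℤ) (u v : ℕ) : Prop :=
  kept L u ∧ kept L v ∧ u < v ∧ ∀ w, u < w → w < v → ¬ kept L w

/-- The sign of the Hasse edge between consecutive labels `u < v` of `Q[c₁,…,cₙ]`:
if no label is skipped the edge lies in the segment of `v` and has sign `t_{seg v}`;
if a removed junction label `ℓ_j` (with `t_j = t_{j+1}`) is skipped, the edge joining the
two adjacent chains has sign `−t_j = −t_{seg v}`. -/
def edgeSign (L : List ℤ) (u v : ℕ) : ℤ :=
  if u + 1 = v then typ L (seg L v) else -typ L (seg L v)

/-- The covering relation of `Q[c₁,…,cₙ]`: consecutive labels `u < v` give a cover `u ⋖ v`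
when the corresponding edge sign is `1`, and a cover `v ⋖ u` when it is `−1`. -/
def pcov (L : List ℤ) (u v : ℕ) : Prop :=
  (consec L u v ∧ edgeSign L u v = 1) ∨ (consec L v u ∧ edgeSign L v u = -1)

/-- The order of the labeled path poset `Q[c₁,…,cₙ]` (on labels). -/
def ple (L : List ℤ) : ℕ → ℕ → Prop := Relation.ReflTransGen (pcov L)

/-- The order of `Q[c₁,…,cₙ]` as a relation on its underlying label set. -/
noncomputable def pleRel (L : List ℤ) :
    {v : ℕ // v ∈ QFinset L} → {v : ℕ // v ∈ QFinset L} → Prop :=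
  fun a b => ple L (a : ℕ) (b : ℕ)

/-- Order ideals (downward-closed subsets) of `Q[c₁,…,cₙ]`. -/
def isIdeal (L : List ℤ) (I : Finset ℕ) : Prop :=
  I ⊆ QFinset L ∧ ∀ u v : ℕ, ple L u v → v ∈ I → u ∈ I

open Classical in
/-- The F-polynomial `F[c₁,…,cₙ] = F(Q[c₁,…,cₙ]) = Σ_I Π_{i∈I} y_i ∈ ℤ[y₁,y₂,…]`,
the sum over all order ideals `I` of `Q[c₁,…,cₙ]`. -/
noncomputable def Fpoly (L : List ℤ) : MvPolynomial ℕ ℤ :=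
  ∑ I ∈ (QFinset L).powerset, if isIdeal L I then ∏ i ∈ I, MvPolynomial.X i else 0

/-- The label set of the chain `S_m`: the labels `ℓ_{m−1}+1, …, ℓ_m − 1`. -/
def SmSet (L : List ℤ) (m : ℕ) : Finset ℕ := Finset.Ioo (ell L (m - 1)) (ell L m)

/-- `lam L m j = λ_m(j)`, the `j`-th vertex of `S_m` from the bottom:
`ℓ_{m−1}+j` if `t_m = 1` and `ℓ_m − j` if `t_m = −1`. -/
def lam (L : List ℤ) (m j : ℕ) : ℕ :=
  if typ L m = 1 then ell L (m - 1) + j else ell L m - j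

/-- Order ideals of the chain `S_m` (ordered by labels if `t_m = 1`, reversed if `t_m = −1`). -/
def chainIdeal (L : List ℤ) (m : ℕ) (I : Finset ℕ) : Prop :=
  I ⊆ SmSet L m ∧
  ∀ u ∈ SmSet L m, ∀ v ∈ SmSet L m,
    (if typ L m = 1 then u ≤ v else v ≤ u) → v ∈ I → u ∈ I

open Classical in
/-- The F-polynomial `F(S_m)` of the chain `S_m`. -/
noncomputable def FS (L : List ℤ) (m : ℕ) : MvPolynomial ℕ ℤ :=
  ∑ I ∈ (SmSet L m).powerset, if chainIdeal L m I then ∏ i ∈ I, MvPolynomial.X i else 0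

noncomputable section

/-- The field `K = ℚ(l,s)` of rational functions in two variables over `ℚ`. -/
abbrev KK : Type := FractionRing (MvPolynomial (Fin 2) ℚ)

/-- The variable `l` of `K = ℚ(l,s)`. -/
def lK : KK := algebraMap (MvPolynomial (Fin 2) ℚ) KK (MvPolynomial.X 0)

/-- The variable `s = q^{1/2}` of `K = ℚ(l,s)`. -/
def sK : KK := algebraMap (MvPolynomial (Fin 2) ℚ) KK (MvPolynomial.X 1)

/-- `q = s²`. -/
def qK : KK := sK ^ 2

/-- `w = (1 − l²q)/(1 − q⁻¹)`. -/
def wK : KK := (1 - lK ^ 2 * qK) / (1 - qK⁻¹)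

/-- The values of the specialization `φ_P` (associated to the even continued fraction `L`,
which only matters through the sign of `b₁`): `y₁ ↦ l²·w⁻¹` if `b₁ > 0` and `y₁ ↦ q⁻²·w`
if `b₁ < 0`; `y_{2i} ↦ −l²q` and `y_{2i+1} ↦ −q⁻¹` for `i ≥ 1`. -/
def phiPvar (L : List ℤ) (i : ℕ) : KK :=
  if i = 1 then (if 0 < L.headI then lK ^ 2 * wK⁻¹ else qK⁻¹ ^ 2 * wK)
  else if i % 2 = 0 then -(lK ^ 2 * qK) else -qK⁻¹

/-- The specialization `φ_P : ℤ[y₁,y₂,…] → K`. -/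
def phiP (L : List ℤ) (p : MvPolynomial ℕ ℤ) : KK :=
  MvPolynomial.eval₂ (Int.castRingHom KK) (phiPvar L) p

end

/-!
Since `ℓ_{m−1} ≥ 2` is even, no label of `S_m` equals `1`, and on the labels of `S_m` the map
`φ_P` only sees parity: `y_v ↦ −l²q` for even `v` and `y_v ↦ −q⁻¹` for odd `v`. The order ideals
of the chain `S_m` are its initial segments (in chain order), and both `ℓ_{m−1}` and `ℓ_m` are
even, so the first label of the chain is odd whichever way it runs. Hence the `j`-element ideal
has weight `l^j` for even `j` and `−q⁻¹·l^{j−1}` for odd `j`. Pairing `j = 2i` with `2i + 1`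
gives `(1 − q⁻¹)·l^{2i}`, and the whole chain has odd length `|b_m| − 1`.
-/

open Finset

def IsLowerIn (s I : Finset ℕ) : Prop :=
  I ⊆ s ∧ ∀ u ∈ s, ∀ v ∈ s, u ≤ v → v ∈ I → u ∈ I

def IsUpperIn (s I : Finset ℕ) : Prop :=
  I ⊆ s ∧ ∀ u ∈ s, ∀ v ∈ s, v ≤ u → v ∈ I → u ∈ I

section IntervalChain

variable {a b : ℕ} {I : Finset ℕ}

theorem IsLowerIn.eq_Ico (hI : IsLowerIn (Ioo a b) I) : I = Ico (a + 1) (a + 1 + #I) := by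
  refine eq_of_subset_of_card_le (fun x hx => ?_) (by simp)
  have hxab := mem_Ioo.1 (hI.1 hx)
  have hbelow : Ioc a x ⊆ I := fun u hu => by
    rw [mem_Ioc] at hu
    exact hI.2 u (mem_Ioo.2 ⟨hu.1, by omega⟩) x (hI.1 hx) hu.2 hx
  have := card_le_card hbelow
  rw [Nat.card_Ioc] at this
  rw [mem_Ico]
  omega

theorem IsUpperIn.eq_Ico (hI : IsUpperIn (Ioo a b) I) : I = Ico (b - #I) b := by
  have hcard : #I ≤ b := (card_le_card hI.1).trans (by simp; omega)
  refine eq_of_subset_of_card_le (fun x hx => ?_) (by simp; omega)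
  have hxab := mem_Ioo.1 (hI.1 hx)
  have habove : Ico x b ⊆ I := fun u hu => by
    rw [mem_Ico] at hu
    exact hI.2 u (mem_Ioo.2 ⟨by omega, hu.2⟩) x (hI.1 hx) hu.1 hx
  have := card_le_card habove
  rw [Nat.card_Ico] at this
  rw [mem_Ico]
  omega

theorem sum_filter_isLowerIn_Ioo {M : Type*} [AddCommMonoid M] (g : Finset ℕ → M)
    [DecidablePred (IsLowerIn (Ioo a b))] (hab : a < b) :
    ∑ I ∈ (Ioo a b).powerset.filter (IsLowerIn (Ioo a b)), g I =
      ∑ j ∈ range (b - a), g (Ico (a + 1) (a + 1 + j)) := by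
  refine sum_nbij' card (fun j => Ico (a + 1) (a + 1 + j)) (fun I hI => ?_) (fun j hj => ?_)
    (fun I hI => (mem_filter.1 hI).2.eq_Ico.symm) (fun j _ => by simp)
    (fun I hI => congrArg g (mem_filter.1 hI).2.eq_Ico)
  · have := card_le_card (mem_filter.1 hI).2.1
    simp only [Nat.card_Ioo] at this
    rw [mem_range]
    omega
  · rw [mem_range] at hj
    refine mem_filter.2 ⟨mem_powerset.2 fun x hx => ?_, fun x hx => ?_, fun u hu v _ huv hv => ?_⟩
    all_goals simp only [mem_Ico, mem_Ioo] at *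
    all_goals omega

theorem sum_filter_isUpperIn_Ioo {M : Type*} [AddCommMonoid M] (g : Finset ℕ → M)
    [DecidablePred (IsUpperIn (Ioo a b))] (hab : a < b) :
    ∑ I ∈ (Ioo a b).powerset.filter (IsUpperIn (Ioo a b)), g I =
      ∑ j ∈ range (b - a), g (Ico (b - j) b) := by
  refine sum_nbij' card (fun j => Ico (b - j) b) (fun I hI => ?_) (fun j hj => ?_)
    (fun I hI => (mem_filter.1 hI).2.eq_Ico.symm) (fun j hj => by simp at hj ⊢; omega)
    (fun I hI => congrArg g (mem_filter.1 hI).2.eq_Ico)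
  · have := card_le_card (mem_filter.1 hI).2.1
    simp only [Nat.card_Ioo] at this
    rw [mem_range]
    omega
  · rw [mem_range] at hj
    refine mem_filter.2 ⟨mem_powerset.2 fun x hx => ?_, fun x hx => ?_, fun u hu v _ huv hv => ?_⟩
    all_goals simp only [mem_Ico, mem_Ioo] at *
    all_goals omega

end IntervalChain

noncomputable def phiPvarParity (v : ℕ) : KK := if v % 2 = 0 then -(lK ^ 2 * qK) else -qK⁻¹

theorem phiPvar_of_one_lt (L : List ℤ) {v : ℕ} (hv : 1 < v) : phiPvar L v = phiPvarParity v := by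
  simp only [phiPvar, phiPvarParity, if_neg hv.ne']

theorem phiPvarParity_congr {v w : ℕ} (h : v % 2 = w % 2) :
    phiPvarParity v = phiPvarParity w := by
  rw [phiPvarParity, phiPvarParity, h]

theorem sK_ne_zero : sK ≠ 0 :=
  (map_ne_zero_iff _ (IsFractionRing.injective (MvPolynomial (Fin 2) ℚ) KK)).2
    (MvPolynomial.X_ne_zero 1)

theorem qK_ne_zero : qK ≠ 0 := pow_ne_zero 2 sK_ne_zero

theorem prod_range_phiPvarParity_two_mul (k : ℕ) :
    ∏ i ∈ range (2 * k), phiPvarParity (i + 1) = lK ^ (2 * k) := by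
  induction k with
  | zero => simp
  | succ k ih =>
    rw [show 2 * (k + 1) = 2 * k + 1 + 1 by ring, prod_range_succ, prod_range_succ, ih]
    simp only [phiPvarParity, show (2 * k + 1 + 1) % 2 = 0 by omega,
      show (2 * k + 1) % 2 = 1 by omega, if_true, one_ne_zero, if_false]
    field_simp [qK_ne_zero]
    ring

theorem prod_range_phiPvarParity_two_mul_add_one (k : ℕ) :
    ∏ i ∈ range (2 * k + 1), phiPvarParity (i + 1) = -(lK ^ (2 * k) * qK⁻¹) := by
  rw [prod_range_succ, prod_range_phiPvarParity_two_mul, phiPvarParity,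
    if_neg (by omega), mul_neg]

theorem sum_range_prod_phiPvarParity (k : ℕ) :
    ∑ j ∈ range (2 * k), ∏ i ∈ range j, phiPvarParity (i + 1) =
      (1 - qK⁻¹) * ∑ i ∈ range k, lK ^ (2 * i) := by
  induction k with
  | zero => simp
  | succ k ih =>
    rw [show 2 * (k + 1) = 2 * k + 1 + 1 by ring, sum_range_succ, sum_range_succ, ih,
      prod_range_phiPvarParity_two_mul, prod_range_phiPvarParity_two_mul_add_one, sum_range_succ]
    ring

theorem prod_Ico_phiPvarParity_of_even_left {a : ℕ} (ha : Even a) (j : ℕ) :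
    ∏ v ∈ Ico (a + 1) (a + 1 + j), phiPvarParity v = ∏ i ∈ range j, phiPvarParity (i + 1) := by
  rw [prod_Ico_eq_prod_range, Nat.add_sub_cancel_left]
  exact prod_congr rfl fun i _ => phiPvarParity_congr (by rcases ha with ⟨c, rfl⟩; omega)

theorem prod_Ico_phiPvarParity_of_even_right {b j : ℕ} (hb : Even b) (hj : j ≤ b) :
    ∏ v ∈ Ico (b - j) b, phiPvarParity v = ∏ i ∈ range j, phiPvarParity (i + 1) := by
  rw [prod_Ico_eq_prod_range, Nat.sub_sub_self hj, ← prod_range_reflect]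
  exact prod_congr rfl fun i hi => phiPvarParity_congr (by
    rw [mem_range] at hi; rcases hb with ⟨c, rfl⟩; omega)

theorem ell_succ (L : List ℤ) {i : ℕ} (hi : i < L.length) :
    ell L (i + 1) = ell L i + (L.getD i 0).natAbs := by
  rw [ell, ell, List.take_add_one, List.map_append, List.sum_append]
  simp [List.getElem?_eq_getElem hi, List.getD_eq_getElem?_getD]

namespace EvenCF

variable {L : List ℤ}

theorem getD (hL : EvenCF L) {i : ℕ} (hi : i < L.length) :
    2 ∣ L.getD i 0 ∧ L.getD i 0 ≠ 0 :=
  hL _ (List.getD_eq_getElem L 0 hi ▸ List.getElem_mem hi)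

theorem even_natAbs_getD (hL : EvenCF L) {i : ℕ} (hi : i < L.length) :
    Even (L.getD i 0).natAbs :=
  Int.natAbs_even.2 (even_iff_two_dvd.2 (hL.getD hi).1)

theorem natAbs_getD_pos (hL : EvenCF L) {i : ℕ} (hi : i < L.length) : 0 < (L.getD i 0).natAbs :=
  Int.natAbs_pos.2 (hL.getD hi).2

theorem even_ell (hL : EvenCF L) (i : ℕ) : Even (ell L i) := by
  refine even_iff_two_dvd.2 (List.dvd_sum fun x hx => ?_)
  obtain ⟨c, hc, rfl⟩ := List.mem_map.1 hx
  exact Int.natAbs_dvd_natAbs.2 (hL c (List.take_subset _ _ hc)).1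

theorem ell_pos (hL : EvenCF L) {i : ℕ} (hi : 1 ≤ i) (hiL : i ≤ L.length) : 0 < ell L i := by
  obtain ⟨k, rfl⟩ : ∃ k, i = k + 1 := ⟨i - 1, by omega⟩
  rw [ell_succ L (by omega)]
  have := hL.natAbs_getD_pos (i := k) (by omega)
  omega

end EvenCF

theorem SmSet_eq_Ioo (L : List ℤ) {m : ℕ} (hm1 : 1 ≤ m) (hm2 : m ≤ L.length) :
    SmSet L m = Ioo (ell L (m - 1)) (ell L (m - 1) + (L.getD (m - 1) 0).natAbs) := by
  rw [SmSet, ← ell_succ L (by omega), Nat.sub_add_cancel hm1]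

open Classical in
theorem phiP_FS (L : List ℤ) (m : ℕ) :
    phiP L (FS L m) =
      ∑ I ∈ (SmSet L m).powerset.filter (chainIdeal L m), ∏ i ∈ I, phiPvar L i := by
  rw [phiP, FS, MvPolynomial.eval₂_sum, sum_filter]
  refine sum_congr rfl fun I _ => ?_
  split_ifs <;> simp [MvPolynomial.eval₂_prod]

theorem chainIdeal_eq_isLowerIn {L : List ℤ} {m : ℕ} (h : typ L m = 1) :
    chainIdeal L m = IsLowerIn (SmSet L m) := by
  funext I
  simp only [chainIdeal, IsLowerIn, h, if_true]

theorem chainIdeal_eq_isUpperIn {L : List ℤ} {m : ℕ} (h : typ L m ≠ 1) :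
    chainIdeal L m = IsUpperIn (SmSet L m) := by
  funext I
  simp only [chainIdeal, IsUpperIn, h, if_false]

section Chain

variable {L : List ℤ} {m : ℕ}

open Classical in
theorem phiP_FS_eq_sum_range (hL : EvenCF L) (hm1 : 1 < m) (hm2 : m ≤ L.length) :
    phiP L (FS L m) =
      ∑ j ∈ range (L.getD (m - 1) 0).natAbs, ∏ i ∈ range j, phiPvarParity (i + 1) := by
  set a := ell L (m - 1)
  set B := (L.getD (m - 1) 0).natAbs
  have hS : SmSet L m = Ioo a (a + B) := SmSet_eq_Ioo L hm1.le hm2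
  have ha : 0 < a := hL.ell_pos (by omega) (by omega)
  have hB : 0 < B := hL.natAbs_getD_pos (by omega)
  have hvar : ∀ I ∈ (SmSet L m).powerset.filter (chainIdeal L m),
      ∏ i ∈ I, phiPvar L i = ∏ i ∈ I, phiPvarParity i := fun I hI =>
    prod_congr rfl fun v hv => phiPvar_of_one_lt L (by
      have hv := mem_powerset.1 (mem_filter.1 hI).1 hv
      rw [hS, mem_Ioo] at hv
      omega)
  rw [phiP_FS, sum_congr rfl hvar]
  by_cases ht : typ L m = 1
  · rw [chainIdeal_eq_isLowerIn ht, hS, sum_filter_isLowerIn_Ioo _ (by omega),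
      Nat.add_sub_cancel_left]
    exact sum_congr rfl fun j _ => prod_Ico_phiPvarParity_of_even_left (hL.even_ell _) j
  · rw [chainIdeal_eq_isUpperIn ht, hS, sum_filter_isUpperIn_Ioo _ (by omega),
      Nat.add_sub_cancel_left]
    exact sum_congr rfl fun j hj => prod_Ico_phiPvarParity_of_even_right
      ((hL.even_ell _).add (hL.even_natAbs_getD (by omega))) (by rw [mem_range] at hj; omega)

theorem prod_SmSet_phiPvar (hL : EvenCF L) (hm1 : 1 < m) (hm2 : m ≤ L.length) :
    ∏ i ∈ SmSet L m, phiPvar L i =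
      ∏ i ∈ range ((L.getD (m - 1) 0).natAbs - 1), phiPvarParity (i + 1) := by
  set a := ell L (m - 1)
  set B := (L.getD (m - 1) 0).natAbs
  have ha : 0 < a := hL.ell_pos (by omega) (by omega)
  have hB : 0 < B := hL.natAbs_getD_pos (by omega)
  have hS : SmSet L m = Ico (a + 1) (a + 1 + (B - 1)) := by
    rw [SmSet_eq_Ioo L hm1.le hm2, ← Ico_add_one_left_eq_Ioo]
    congr 1
    omega
  rw [← prod_Ico_phiPvarParity_of_even_left (hL.even_ell _), ← hS]
  exact prod_congr rfl fun v hv => phiPvar_of_one_lt L (by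
    rw [SmSet_eq_Ioo L hm1.le hm2, mem_Ioo] at hv
    omega)

end Chain

/-- For an even continued fraction `[b₁,…,bₙ]` and `1 < m ≤ n`:
(i) `φ_P(F(S_m)) = (1 − q⁻¹)·(1 + l² + ⋯ + l^{|b_m|−2})`, and
(ii) `Π_{i∈S_m} φ_P(y_i) = −l^{|b_m|−2}·q⁻¹`. -/
theorem phiP_chain (L : List ℤ) (hL : EvenCF L) (m : ℕ) (hm1 : 1 < m) (hm2 : m ≤ L.length) :
    phiP L (FS L m) =
        (1 - qK⁻¹) * ∑ i ∈ Finset.range ((L.getD (m - 1) 0).natAbs / 2), lK ^ (2 * i) ∧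
    ∏ i ∈ SmSet L m, phiPvar L i = -(lK ^ ((L.getD (m - 1) 0).natAbs - 2) * qK⁻¹) := by
  obtain ⟨k, hk⟩ : ∃ k, (L.getD (m - 1) 0).natAbs = 2 * (k + 1) := by
    obtain ⟨c, hc⟩ := hL.even_natAbs_getD (i := m - 1) (by omega)
    have := hL.natAbs_getD_pos (i := m - 1) (by omega)
    exact ⟨c - 1, by omega⟩
  rw [phiP_FS_eq_sum_range hL hm1 hm2, prod_SmSet_phiPvar hL hm1 hm2, hk,
    Nat.mul_div_cancel_left _ two_pos, show 2 * (k + 1) - 1 = 2 * k + 1 by omega,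
    show 2 * (k + 1) - 2 = 2 * k by omega]
  exact ⟨sum_range_prod_phiPvarParity (k + 1), prod_range_phiPvarParity_two_mul_add_one k⟩
end

section
/- Let [b_1,…,b_n] be any even continued fraction with n ≥ 1. Then P[b_1,…,b_{n−1}, b_n + 2·sgn(b_n)] = l^{−2t_n}·P[b_1,…,b_n] + t_n·l^{−t_n}·(q^{1/2} − q^{−1/2})·P[b_1,…,b_{n−1}], as elements of K = ℚ(l,s) with q = s², q^{1/2} = s. -/
open scoped BigOperators

noncomputable section

/-- Duzhin's recursion for the HOMFLY polynomial of a rational link, computed on the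
*reversed* list `[bₙ, …, b₁]`: `P[] = 1`, in the degenerate case the value is
`(l − l⁻¹)/(q^{1/2} − q^{−1/2})`, and
`P₀ = l^{−tₙ|bₙ|}·P₂ + (q^{1/2} − q^{−1/2})·((1 − l^{−tₙ|bₙ|})/(l − l⁻¹))·P₁`. -/
def PhomRev : List ℤ → KK
  | [] => 1
  | [b] =>
    lK ^ (-(Int.sign b * (b.natAbs : ℤ))) * ((lK - lK⁻¹) / (sK - sK⁻¹)) +
      (sK - sK⁻¹) * ((1 - lK ^ (-(Int.sign b * (b.natAbs : ℤ)))) / (lK - lK⁻¹)) * 1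
  | b :: c :: bs =>
    lK ^ (-((-1 : ℤ) ^ (bs.length + 1) * Int.sign b * (b.natAbs : ℤ))) * PhomRev bs +
      (sK - sK⁻¹) *
        ((1 - lK ^ (-((-1 : ℤ) ^ (bs.length + 1) * Int.sign b * (b.natAbs : ℤ)))) /
          (lK - lK⁻¹)) * PhomRev (c :: bs)

/-- The HOMFLY polynomial `P[b₁,…,bₙ]` of the rational link `C([b₁,…,bₙ])`. -/
def Phom (L : List ℤ) : KK := PhomRev L.reverse

/-- The monomial `m[b₁,…,bₙ]`, computed on the reversed list `[bₙ,…,b₁]`: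
`m[] = 1`, `m` in the degenerate case is `−l⁻¹ q^{−1/2} w`, and otherwise
`m = −l q^{1/2} m₁` if `tₙ = −1`, `m = l^{−|bₙ|} m₂` if `t_{n−1} = −1, tₙ = 1`,
`m = l^{1−|bₙ|} q^{1/2} m₁` if `t_{n−1} = 1, tₙ = 1` (with `t₀ = −1`). -/
def mRev : List ℤ → KK
  | [] => 1
  | [b] =>
    if Int.sign b = -1 then -(lK * sK)
    else lK ^ (-(b.natAbs : ℤ)) * (-(lK⁻¹ * sK⁻¹) * wK)
  | b :: c :: bs =>
    if (-1 : ℤ) ^ (bs.length + 1) * Int.sign b = -1 then -(lK * sK) * mRev (c :: bs)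
    else if (-1 : ℤ) ^ bs.length * Int.sign c = -1 then
      lK ^ (-(b.natAbs : ℤ)) * mRev bs
    else lK ^ ((1 : ℤ) - (b.natAbs : ℤ)) * sK * mRev (c :: bs)

/-- `m[b₁,…,bₙ]`. -/
def mFun (L : List ℤ) : KK := mRev L.reverse

end

/-! The last step of Duzhin's recursion depends on `bₙ` only through `u = l^{−tₙ|bₙ|}`, and
affinely: `P[b₁,…,bₙ] = u·P₂ + (s − s⁻¹)·(1 − u)/(l − l⁻¹)·P[b₁,…,bₙ₋₁]`, where `P₂` does not
involve `bₙ` and `−tₙ|bₙ| = −c` for `c = (−1)^{n−1}·bₙ`. Replacing `bₙ` by `bₙ + 2 sgn bₙ` replaces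
`c` by `c + 2 sgn c`, i.e. multiplies `u` by `l^{−2t}` with `t = sgn c = tₙ`, and the identity
`1 − l^{−2t} = t·l^{−t}·(l − l⁻¹)` for `t ∈ {−1, 0, 1}` moves the defect into the `P[b₁,…,bₙ₋₁]`
term. -/

lemma lK_ne_zero : lK ≠ 0 := by
  rw [lK, Ne, map_eq_zero_iff _ (IsFractionRing.injective (MvPolynomial (Fin 2) ℚ) KK)]
  exact MvPolynomial.X_ne_zero 0

lemma lK_sub_inv_ne_zero : lK - lK⁻¹ ≠ 0 := by
  intro h
  have hsq : lK ^ 2 = 1 := by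
    rw [sq]; nth_rewrite 2 [sub_eq_zero.mp h]; exact mul_inv_cancel₀ lK_ne_zero
  rw [lK, ← map_pow, ← map_one (algebraMap (MvPolynomial (Fin 2) ℚ) KK),
    (IsFractionRing.injective _ KK).eq_iff] at hsq
  have h4 := congrArg (MvPolynomial.eval fun _ => (2 : ℚ)) hsq
  norm_num at h4

section SkeinStep

variable {K : Type*} [Field K] {x : K}

lemma one_sub_zpow_neg_two_mul_sign (hx : x ≠ 0) (c : ℤ) :
    1 - x ^ (-(2 * c.sign)) = c.sign * x ^ (-c.sign) * (x - x⁻¹) := by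
  rcases c.sign_trichotomy with h | h | h <;> simp [h, zpow_neg] <;> field_simp; ring

lemma duzhin_step_add_two_sign (hx : x ≠ 0) (hx' : x - x⁻¹ ≠ 0) (d P₁ P₂ : K) (c : ℤ) :
    x ^ (-(c + 2 * c.sign)) * P₂ + d * ((1 - x ^ (-(c + 2 * c.sign))) / (x - x⁻¹)) * P₁ =
      x ^ (-(2 * c.sign)) * (x ^ (-c) * P₂ + d * ((1 - x ^ (-c)) / (x - x⁻¹)) * P₁) +
        c.sign * x ^ (-c.sign) * d * P₁ := by
  have hsplit : x ^ (-(c + 2 * c.sign)) = x ^ (-(2 * c.sign)) * x ^ (-c) := by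
    rw [← zpow_add₀ hx]; ring_nf
  rw [hsplit, div_eq_mul_inv, div_eq_mul_inv]
  linear_combination (d * P₁ * (x - x⁻¹)⁻¹) * one_sub_zpow_neg_two_mul_sign hx c +
    (c.sign * x ^ (-c.sign) * d * P₁) * mul_inv_cancel₀ hx'

end SkeinStep

lemma PhomRev_cons (R : List ℤ) : ∃ P₂ : KK, ∀ b : ℤ,
    PhomRev (b :: R) = lK ^ (-((-1) ^ R.length * b)) * P₂ +
      (sK - sK⁻¹) * ((1 - lK ^ (-((-1) ^ R.length * b))) / (lK - lK⁻¹)) * PhomRev R := by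
  rcases R with _ | ⟨c, bs⟩
  · exact ⟨(lK - lK⁻¹) / (sK - sK⁻¹), fun b => by
      simp only [PhomRev, List.length_nil, pow_zero, one_mul, mul_one, Int.sign_mul_natAbs]⟩
  · refine ⟨PhomRev bs, fun b => ?_⟩
    simp only [PhomRev, List.length_cons, mul_assoc, Int.sign_mul_natAbs]

lemma Phom_append_singleton (M : List ℤ) : ∃ P₂ : KK, ∀ b : ℤ,
    Phom (M ++ [b]) = lK ^ (-((-1) ^ M.length * b)) * P₂ +
      (sK - sK⁻¹) * ((1 - lK ^ (-((-1) ^ M.length * b))) / (lK - lK⁻¹)) * Phom M := by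
  simpa [Phom] using PhomRev_cons M.reverse

lemma Int.sign_neg_one_pow (k : ℕ) : ((-1) ^ k : ℤ).sign = (-1) ^ k := by
  rcases neg_one_pow_eq_or ℤ k with h | h <;> simp [h]

theorem homfly_plus_two_step_general (L : List ℤ) (hne : L ≠ []) :
    Phom (L.dropLast ++ [L.getLast hne + 2 * Int.sign (L.getLast hne)]) =
      lK ^ (-(2 * typ L L.length)) * Phom L +
        (typ L L.length : KK) * lK ^ (-typ L L.length) * (sK - sK⁻¹) * Phom L.dropLast := by
  obtain ⟨M, b, rfl⟩ : ∃ M b, L = M ++ [b] :=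
    ⟨L.dropLast, L.getLast hne, (List.dropLast_append_getLast hne).symm⟩
  set c := (-1) ^ M.length * b
  have htyp : typ (M ++ [b]) (M ++ [b]).length = c.sign := by
    simp [typ, c, Int.sign_mul, Int.sign_neg_one_pow]
  have hc : (-1) ^ M.length * (b + 2 * b.sign) = c + 2 * c.sign := by
    rw [Int.sign_mul, Int.sign_neg_one_pow]; ring
  obtain ⟨P₂, hP⟩ := Phom_append_singleton M
  simp only [List.getLast_append_singleton, List.dropLast_concat, htyp, hP, hc]
  exact duzhin_step_add_two_sign lK_ne_zero lK_sub_inv_ne_zero _ _ _ c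

/-- For an even continued fraction `[b₁,…,bₙ]` with `n ≥ 1`,
`P[b₁,…,b_{n−1}, bₙ + 2·sgn(bₙ)] = l^{−2tₙ}·P[b₁,…,bₙ] + tₙ·l^{−tₙ}·(q^{1/2} − q^{−1/2})·P[b₁,…,b_{n−1}]`. -/
theorem homfly_plus_two_step (L : List ℤ) (hL : EvenCF L) (hne : L ≠ []) :
    Phom (L.dropLast ++ [L.getLast hne + 2 * Int.sign (L.getLast hne)]) =
      lK ^ (-(2 * typ L L.length)) * Phom L +
        (typ L L.length : KK) * lK ^ (-typ L L.length) * (sK - sK⁻¹) * Phom L.dropLast :=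
  homfly_plus_two_step_general L hne
end
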